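/- In an implicative-orthomodular lattice X, if x commutes with y then x commutes with y*, x* commutes with y, and x* commutes with y*. -/
import Mathlib


class InvBE (X : Type*) where
  imp : X → X → X
  one : X
  zero : X
  imp_self : ∀ x, imp x x = one
  imp_one : ∀ x, imp x one = one
  one_imp : ∀ x, imp one x = x
  exch : ∀ x y z, imp x (imp y z) = imp y (imp x z)
  zero_imp : ∀ x, imp zero x = one
  invol : ∀ x, imp (imp x zero) zero = x

namespace InvBE

variable {X : Type*} [InvBE X]

/-- `x* = x → 0` -/
def star (x : X) : X := imp x zero

/-- `x ⊔ y = (x → y) → y` -/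
def sup (x y : X) : X := imp (imp x y) y

/-- `x ⊓ y = ((x* → y*) → y*)*` -/
def inf (x y : X) : X := star (imp (imp (star x) (star y)) (star y))

/-- `x ≤_L y` iff `x = (x → y*)*` -/
def leL (x y : X) : Prop := x = star (imp x (star y))

/-- `x ≤_Q y` iff `x = x ⊓ y` -/
def leQ (x y : X) : Prop := x = inf x y

/-- `x C y` iff `x = (x → y*) → (x → y)*` -/
def Comm (x y : X) : Prop := x = imp (imp x (star y)) (star (imp x y))

/-- divisibility condition for the pair `(x, y)`: `x → (x → y)* = x → y*` -/
def Idiv (x y : X) : Prop := imp x (star (imp x y)) = imp x (star y)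

/-- `Idis₁`: `((x* → y) → z*)* = (x → z*) → (y → z*)*` -/
def Idis1 (x y z : X) : Prop :=
  star (imp (imp (star x) y) (star z)) = imp (imp x (star z)) (star (imp y (star z)))

/-- `Idis₂`: `((x → y*) → z)* = (z* → x) → (z* → y)*` -/
def Idis2 (x y z : X) : Prop :=
  star (imp (imp x (star y)) z) = imp (imp (star z) x) (star (imp (star z) y))

/-- a triple is distributive if all its permutations satisfy `Idis₁` and `Idis₂` -/
def DistribTriple (x y z : X) : Prop :=
  Idis1 x y z ∧ Idis1 x z y ∧ Idis1 y x z ∧ Idis1 y z x ∧ Idis1 z x y ∧ Idis1 z y x ∧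
  Idis2 x y z ∧ Idis2 x z y ∧ Idis2 y x z ∧ Idis2 y z x ∧ Idis2 z x y ∧ Idis2 z y x

end InvBE

/-- implicative involutive BE algebra: `(x → y) → x = x` -/
class ImplInvBE (X : Type*) extends InvBE X where
  impl : ∀ x y, imp (imp x y) x = x

/-- implicative-orthomodular lattice: `x ⊓ (y → x) = x` -/
class IOML (X : Type*) extends ImplInvBE X where
  iom : ∀ x y, InvBE.inf x (imp y x) = x

open InvBE

section Aux
variable {X : Type*} [IOML X]

private lemma ss (x : X) : star (star x) = x := InvBE.invol x

private lemma d3 (a b : X) : imp a (star b) = imp b (star a) :=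
  InvBE.exch a b InvBE.zero

private lemma d1 (x : X) : imp (star x) x = x := ImplInvBE.impl x InvBE.zero

private lemma g2 (x y : X) : imp (imp x y) (star y) = star y := by
  have e : imp (star y) (imp x y) = imp x y := by
    rw [InvBE.exch, d1]
  calc imp (imp x y) (star y)
      = imp (imp (star y) (imp x y)) (star y) := by rw [e]
    _ = star y := ImplInvBE.impl _ _

private lemma d6 (x y : X) :
    imp (imp y x) (star (imp (imp y x) x)) = star x := by
  have h := IOML.iom x y
  unfold InvBE.inf at h
  have h2 := congrArg InvBE.star h
  rw [ss] at h2
  rw [d3 (star x) (imp y x), ss] at h2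
  rw [d3 (imp (imp y x) x) (imp y x)] at h2
  exact h2

end Aux

theorem stmt13 {X : Type*} [IOML X] (x y : X) (h : Comm x y) :
    Comm x (star y) ∧ Comm (star x) y ∧ Comm (star x) (star y) := by
  have h1 : x = imp (imp x (star y)) (star (imp x y)) := h
  have h2 : x = imp (imp x y) (star (imp x (star y))) :=
    h1.trans (d3 (imp x (star y)) (imp x y))
  have gpy : imp (imp x (star y)) y = y := by
    have := g2 x (star y)
    rwa [ss] at this
  have Ulem : imp (star y) x = imp (imp x y) y := by
    calc imp (star y) x
        = imp (star y) (imp (imp x (star y)) (star (imp x y))) := by rw [← h1]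
      _ = imp (imp x (star y)) (imp (star y) (star (imp x y))) := InvBE.exch ..
      _ = imp (imp x (star y)) (imp (imp x y) (star (star y))) := by
            rw [d3 (star y) (imp x y)]
      _ = imp (imp x (star y)) (imp (imp x y) y) := by rw [ss]
      _ = imp (imp x y) (imp (imp x (star y)) y) := InvBE.exch ..
      _ = imp (imp x y) y := by rw [gpy]
  have Vlem : imp y x = imp (imp x (star y)) (star y) := by
    calc imp y x
        = imp y (imp (imp x y) (star (imp x (star y)))) := by rw [← h2]
      _ = imp (imp x y) (imp y (star (imp x (star y)))) := InvBE.exch ..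
      _ = imp (imp x y) (imp (imp x (star y)) (star y)) := by
            rw [d3 y (imp x (star y))]
      _ = imp (imp x (star y)) (imp (imp x y) (star y)) := InvBE.exch ..
      _ = imp (imp x (star y)) (star y) := by rw [g2]
  have UxV : imp (imp (imp x y) y) x = imp (imp x (star y)) (star y) := by
    calc imp (imp (imp x y) y) x
        = imp (imp (imp x y) y) (imp (imp x (star y)) (star (imp x y))) := by
            rw [← h1]
      _ = imp (imp x (star y)) (imp (imp (imp x y) y) (star (imp x y))) :=
            InvBE.exch ..
      _ = imp (imp x (star y)) (imp (imp x y) (star (imp (imp x y) y))) := by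
            rw [d3 (imp (imp x y) y) (imp x y)]
      _ = imp (imp x (star y)) (star y) := by rw [d6 y x]
  have main2 : Comm (star x) y := by
    show star x = imp (imp (star x) (star y)) (star (imp (star x) y))
    have e1 : imp (star x) (star y) = imp y x := by
      rw [d3 (star x) y, ss]
    have e2 : imp (star x) y = imp (star y) x := by
      calc imp (star x) y = imp (star x) (star (star y)) := by rw [ss]
        _ = imp (star y) (star (star x)) := d3 _ _
        _ = imp (star y) x := by rw [ss]
    rw [e1, e2, Vlem, Ulem]
    have d := d6 x (star y)
    rw [Ulem] at d
    rw [UxV] at d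
    rw [d3 (imp (imp x (star y)) (star y)) (imp (imp x y) y)]
    exact d.symm
  refine ⟨?_, main2, ?_⟩
  · show x = imp (imp x (star (star y))) (star (imp x (star y)))
    rw [ss]
    exact h2
  · show star x = imp (imp (star x) (star (star y))) (star (imp (star x) (star y)))
    rw [ss]
    rw [d3 (imp (star x) y) (imp (star x) (star y))]
    exact main2
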